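/- (Intermediate-level window criterion.) Let K ⊆ ℝ^m be a nonempty convex set, ṽ ∈ ℤ^N, and I ⊆ {1,…,N}. Then the following are equivalent: (a) there exists w ∈ ℤ^N with π(w) ∈ K + 𝔹, with w_i < ṽ_i for every i ∈ I and w_i = ṽ_i for every i ∉ I; (b) K ∩ (π(ṽ) + 𝔹 − π(τ_I) − π(e_I)) ≠ ∅. -/

import Mathlib

/-!
(a) ⇒ (b) is immediate with `t = ṽ - w - e_I`. For (b) ⇒ (a) write `t = ⌊t⌋ + {t}`: it remains to
round the fractional parts to `0` or `1`, block by block, at a cost of at most `η_i / 2` in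
coordinate `i`. Balance gives `|β_{i,j}| ≤ η_i`, and partial sums of steps of size at most `η` come
within `η / 2` of every point of `[∑ min(β_j, 0) - η/2, ∑ max(β_j, 0) + η/2]`.
-/

open Finset

section Rounding

variable {α : Type*}

theorem exists_subset_abs_sub_sum_le (b : α → ℝ) {η : ℝ} {J : Finset α}
    (hb : ∀ j ∈ J, |b j| ≤ η) {s : ℝ}
    (hs : s ∈ Set.Icc (∑ j ∈ J, min (b j) 0 - η / 2) (∑ j ∈ J, max (b j) 0 + η / 2)) :
    ∃ S ⊆ J, |s - ∑ j ∈ S, b j| ≤ η / 2 := by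
  classical
  induction J using Finset.induction_on generalizing s with
  | empty =>
    refine ⟨∅, subset_refl _, ?_⟩
    simp only [sum_empty, zero_sub, zero_add, sub_zero, Set.mem_Icc] at hs ⊢
    exact abs_le.mpr ⟨by linarith [hs.1], hs.2⟩
  | insert a J ha ih =>
    have hbJ : ∀ j ∈ J, |b j| ≤ η := fun j hj => hb j (mem_insert_of_mem hj)
    by_cases hsJ : s ∈ Set.Icc (∑ j ∈ J, min (b j) 0 - η / 2) (∑ j ∈ J, max (b j) 0 + η / 2)
    · obtain ⟨S, hSJ, hS⟩ := ih hbJ hsJ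
      exact ⟨S, hSJ.trans (subset_insert a J), hS⟩
    · -- the interval for `J` has length at least `η ≥ |b a|`, so the step `b a` brings `s` back
      have hsum_le : ∑ j ∈ J, min (b j) 0 ≤ ∑ j ∈ J, max (b j) 0 :=
        sum_le_sum fun j _ => min_le_max
      have hba := abs_le.mp (hb a (mem_insert_self a J))
      have hsa : s - b a ∈ Set.Icc (∑ j ∈ J, min (b j) 0 - η / 2)
          (∑ j ∈ J, max (b j) 0 + η / 2) := by
        rw [sum_insert ha, sum_insert ha, Set.mem_Icc] at hs
        rw [Set.mem_Icc, not_and_or, not_le, not_le] at hsJ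
        rw [Set.mem_Icc]
        rcases le_total (b a) 0 with h | h
        · rw [min_eq_left h, max_eq_right h] at hs
          rcases hsJ with h' | h' <;> constructor <;> linarith
        · rw [min_eq_right h, max_eq_left h] at hs
          rcases hsJ with h' | h' <;> constructor <;> linarith
      obtain ⟨S, hSJ, hS⟩ := ih hbJ hsa
      refine ⟨insert a S, insert_subset_insert a hSJ, ?_⟩
      rwa [sum_insert fun haS => ha (hSJ haS), ← sub_sub]

theorem exists_subset_abs_add_sum_mul_sub_sum_le (b f : α → ℝ) {η r : ℝ} {J : Finset α}
    (hb : ∀ j ∈ J, |b j| ≤ η) (hf : ∀ j ∈ J, f j ∈ Set.Icc (0 : ℝ) 1) (hr : |r| ≤ η / 2) :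
    ∃ S ⊆ J, |r + ∑ j ∈ J, b j * f j - ∑ j ∈ S, b j| ≤ η / 2 := by
  refine exists_subset_abs_sub_sum_le b hb ?_
  have hlo : ∑ j ∈ J, min (b j) 0 ≤ ∑ j ∈ J, b j * f j := sum_le_sum fun j hj => by
    obtain ⟨hf0, hf1⟩ := hf j hj
    rcases le_total (b j) 0 with h | h
    · rw [min_eq_left h]; nlinarith
    · rw [min_eq_right h]; positivity
  have hhi : ∑ j ∈ J, b j * f j ≤ ∑ j ∈ J, max (b j) 0 := sum_le_sum fun j hj => by
    obtain ⟨hf0, hf1⟩ := hf j hj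
    rcases le_total (b j) 0 with h | h
    · rw [max_eq_right h]; nlinarith
    · rw [max_eq_left h]; nlinarith
  obtain ⟨hr₁, hr₂⟩ := abs_le.1 hr
  constructor <;> linarith

theorem abs_le_sum_filter_pos_of_sum_eq_zero {F : Finset α} {b : α → ℝ} (hF : ∑ j ∈ F, b j = 0)
    {j : α} (hj : j ∈ F) : |b j| ≤ ∑ k ∈ F with 0 < b k, b k := by
  rw [← sum_filter_add_sum_filter_not F (0 < b ·)] at hF
  rcases lt_or_ge 0 (b j) with h | h
  · rw [abs_of_pos h]
    exact single_le_sum (fun k hk => (mem_filter.1 hk).2.le) (mem_filter.2 ⟨hj, h⟩)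
  · have hneg : -b j ≤ ∑ k ∈ F with ¬0 < b k, -b k :=
      single_le_sum (f := fun k => -b k) (fun k hk => neg_nonneg.2 (not_lt.1 (mem_filter.1 hk).2))
        (mem_filter.2 ⟨hj, h.not_gt⟩)
    rw [sum_neg_distrib] at hneg
    rw [abs_of_nonpos h]
    linarith

end Rounding

section Cone

variable {ι : Type*} [DecidableEq ι] {I : Finset ι} {v : ι → ℤ}

theorem exists_nonneg_eq_sub_sub_of_lt {w : ι → ℤ} (hlt : ∀ j ∈ I, w j < v j)
    (hwI : ∀ j ∉ I, w j = v j) :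
    ∃ t : ι → ℝ, (∀ j, 0 ≤ t j) ∧ (∀ j ∉ I, t j = 0) ∧
      (fun j => (w j : ℝ)) = (fun j => (v j : ℝ)) - t - fun j => if j ∈ I then 1 else 0 := by
  refine ⟨fun j => v j - w j - if j ∈ I then 1 else 0, fun j => ?_,
    fun j hj => by simp [hj, hwI j hj], by funext j; simp only [Pi.sub_apply]; ring⟩
  by_cases hj : j ∈ I
  · have : (w j : ℝ) + 1 ≤ v j := by exact_mod_cast hlt j hj
    simp only [if_pos hj]
    linarith
  · simp [hj, hwI j hj]

theorem exists_lt_eq_sub_sub_of_nonneg {n : ι → ℤ} (hn0 : ∀ j, 0 ≤ n j)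
    (hnI : ∀ j ∉ I, n j = 0) :
    ∃ w : ι → ℤ, (∀ j ∈ I, w j < v j) ∧ (∀ j ∉ I, w j = v j) ∧
      (fun j => (w j : ℝ)) = (fun j => (v j : ℝ)) - (fun j => (n j : ℝ)) -
        fun j => if j ∈ I then 1 else 0 := by
  refine ⟨fun j => v j - n j - if j ∈ I then 1 else 0, fun j hj => ?_,
    fun j hj => by simp [hj, hnI j hj], by funext j; simp only [Pi.sub_apply]; push_cast; ring⟩
  have := hn0 j
  simp only [if_pos hj]
  omega

end Cone

section Window

variable {N m : ℕ} {blk : Fin N → Fin m} {b : Fin N → ℤ} {η : Fin m → ℝ}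
  {π : (Fin N → ℝ) →ₗ[ℝ] (Fin m → ℝ)} {I : Finset (Fin N)}

theorem abs_weight_le_eta
    (hbal : ∀ i : Fin m, ∑ j ∈ Finset.univ.filter (fun j => blk j = i), b j = 0)
    (hη : ∀ i, η i = ∑ j ∈ Finset.univ.filter (fun j => blk j = i ∧ 0 < b j), (b j : ℝ))
    {i : Fin m} {j : Fin N} (hj : blk j = i) : |(b j : ℝ)| ≤ η i := by
  have := abs_le_sum_filter_pos_of_sum_eq_zero (b := fun k => (b k : ℝ))
    (by exact_mod_cast hbal i) (mem_filter.2 ⟨mem_univ j, hj⟩)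
  simpa only [hη, filter_filter, Int.cast_pos] using this

theorem exists_nonneg_int_abs_add_sub_le
    (hbal : ∀ i : Fin m, ∑ j ∈ Finset.univ.filter (fun j => blk j = i), b j = 0)
    (hπ : ∀ (x : Fin N → ℝ) (i : Fin m),
      π x i = ∑ j ∈ Finset.univ.filter (fun j => blk j = i), (b j : ℝ) * x j)
    (hη : ∀ i, η i = ∑ j ∈ Finset.univ.filter (fun j => blk j = i ∧ 0 < b j), (b j : ℝ))
    {t : Fin N → ℝ} (ht0 : ∀ j, 0 ≤ t j) (htI : ∀ j ∉ I, t j = 0)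
    {r : Fin m → ℝ} (hr : ∀ i, |r i| ≤ η i / 2) :
    ∃ n : Fin N → ℤ, (∀ j, 0 ≤ n j) ∧ (∀ j ∉ I, n j = 0) ∧
      ∀ i, |r i + π (t - fun j => (n j : ℝ)) i| ≤ η i / 2 := by
  choose S hSJ hS using fun i => exists_subset_abs_add_sum_mul_sub_sum_le
    (fun j => (b j : ℝ)) (fun j => Int.fract (t j)) (J := {j | blk j = i ∧ j ∈ I})
    (fun j hj => abs_weight_le_eta hbal hη (mem_filter.1 hj).2.1)
    (fun j _ => ⟨Int.fract_nonneg _, (Int.fract_lt_one _).le⟩) (hr i)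
  let c : Fin N → ℤ := fun j => if j ∈ S (blk j) then 1 else 0
  have hc0 : ∀ j, 0 ≤ c j := fun j => by unfold c; split_ifs <;> norm_num
  have hcI : ∀ j ∉ I, c j = 0 := fun j hj => if_neg fun h => hj (mem_filter.1 (hSJ _ h)).2.2
  refine ⟨fun j => ⌊t j⌋ + c j, fun j => add_nonneg (Int.floor_nonneg.2 (ht0 j)) (hc0 j),
    fun j hj => by simp [htI j hj, hcI j hj], fun i => ?_⟩
  have hfract : ∑ j with blk j = i, (b j : ℝ) * Int.fract (t j)
      = ∑ j with blk j = i ∧ j ∈ I, (b j : ℝ) * Int.fract (t j) := by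
    rw [← filter_filter]
    refine (sum_filter_of_ne fun j _ hj => ?_).symm
    by_contra hjI
    simp [htI j hjI] at hj
  have hround : ∑ j with blk j = i, (b j : ℝ) * c j = ∑ j ∈ S i, (b j : ℝ) := by
    have hSF : S i ⊆ ({j | blk j = i} : Finset (Fin N)) := fun j hj =>
      mem_filter.2 ⟨mem_univ j, (mem_filter.1 (hSJ i hj)).2.1⟩
    calc ∑ j with blk j = i, (b j : ℝ) * c j
        = ∑ j with blk j = i, if j ∈ S i then (b j : ℝ) else 0 :=
          sum_congr rfl fun j hj => by
            rw [← (mem_filter.1 hj).2]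
            split_ifs with h <;> simp [c, h]
      _ = ∑ j ∈ S i, (b j : ℝ) := by rw [sum_ite_mem, inter_eq_right.2 hSF]
  have hπ_sub : π (t - fun j => ((⌊t j⌋ + c j : ℤ) : ℝ)) i
      = ∑ j with blk j = i, (b j : ℝ) * Int.fract (t j) - ∑ j with blk j = i, (b j : ℝ) * c j := by
    rw [hπ, ← sum_sub_distrib]
    refine sum_congr rfl fun j _ => ?_
    rw [Pi.sub_apply, Int.fract, Int.cast_add]
    ring
  rw [hπ_sub, hfract, hround, ← add_sub_assoc]
  exact hS i

end Window

theorem intermediate_window_criterion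
    {N m : ℕ}
    -- block structure: `blk j` is the block of index `j`, with weight `b j`
    (blk : Fin N → Fin m) (b : Fin N → ℤ)
    (hbal : ∀ i : Fin m, ∑ j ∈ Finset.univ.filter (fun j => blk j = i), b j = 0)
    (π : (Fin N → ℝ) →ₗ[ℝ] (Fin m → ℝ))
    (hπ : ∀ (x : Fin N → ℝ) (i : Fin m),
      π x i = ∑ j ∈ Finset.univ.filter (fun j => blk j = i), (b j : ℝ) * x j)
    (η : Fin m → ℝ)
    (hη : ∀ i, η i = ∑ j ∈ Finset.univ.filter (fun j => blk j = i ∧ 0 < b j), (b j : ℝ))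
    (K : Set (Fin m → ℝ))
    (v : Fin N → ℤ) (I : Finset (Fin N)) :
    (∃ w : Fin N → ℤ,
        (∃ y ∈ K, ∃ bb : Fin m → ℝ,
          (∀ i, -(η i) / 2 ≤ bb i ∧ bb i ≤ η i / 2) ∧
          π (fun j => (w j : ℝ)) = y + bb) ∧
        (∀ i ∈ I, w i < v i) ∧ (∀ i ∉ I, w i = v i)) ↔
      (∃ y ∈ K, ∃ bb : Fin m → ℝ,
        (∀ i, -(η i) / 2 ≤ bb i ∧ bb i ≤ η i / 2) ∧
        ∃ t : Fin N → ℝ, (∀ j, 0 ≤ t j) ∧ (∀ j, j ∉ I → t j = 0) ∧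
          y = π (fun j => (v j : ℝ)) + bb - π t
              - π (fun j => if j ∈ I then (1 : ℝ) else 0)) := by
  have hbox {x c : ℝ} : |x| ≤ c / 2 ↔ -c / 2 ≤ x ∧ x ≤ c / 2 := by rw [neg_div, abs_le]
  have hbox_neg {bb : Fin m → ℝ} (hbb : ∀ i, -(η i) / 2 ≤ bb i ∧ bb i ≤ η i / 2) (i : Fin m) :
      |(-bb) i| ≤ η i / 2 := by
    rw [Pi.neg_apply, abs_neg]; exact hbox.2 (hbb i)
  constructor
  · rintro ⟨w, ⟨y, hy, bb, hbb, hw⟩, hlt, hwI⟩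
    obtain ⟨t, ht0, htI, hwt⟩ := exists_nonneg_eq_sub_sub_of_lt hlt hwI
    refine ⟨y, hy, -bb, fun i => hbox.1 (hbox_neg hbb i), t, ht0, htI, ?_⟩
    rw [← sub_eq_of_eq_add hw, hwt, map_sub, map_sub]
    abel
  · rintro ⟨y, hy, bb, hbb, t, ht0, htI, rfl⟩
    obtain ⟨n, hn0, hnI, hn⟩ := exists_nonneg_int_abs_add_sub_le hbal hπ hη ht0 htI (hbox_neg hbb)
    obtain ⟨w, hlt, hwI, hwn⟩ := exists_lt_eq_sub_sub_of_nonneg (v := v) hn0 hnI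
    refine ⟨w, ⟨_, hy, -bb + π (t - fun j => (n j : ℝ)), fun i => hbox.1 (hn i), ?_⟩, hlt, hwI⟩
    rw [hwn, map_sub, map_sub, map_sub]
    abel
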